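/- arXiv:2503.13699 — 2 statements merged into one kernel-verified Lean document; each statement's English description precedes it below -/
import Mathlib

section
/- Let C > 1, let n ≥ 1 be a natural number, let 0 ≤ α ≤ γ ≤ 1 with γ + α > 0, and define η* = 16(γ+α)^4 / (27(1+C)^4 n^24) and p* = 32(γ+α)^3 / (27(1+C)^4 n^24). Suppose δ₁ ∈ [0,1], 0 ≤ δ₂ ≤ C n^6 δ₁^{1/4}, t ∈ [−γ, γ], and ε ≥ 0 satisfy (1−p*)(1−δ₁) + p*(δ₂ + 1 − (γ+t)/2) ≥ 1 − ε. Then t ≤ α + (27(1+C)^4 / (16(γ+α)^3)) n^24 ε. -/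
/-- Four-term AM-GM in polynomial disguise: if `27 a⁴ ≤ 256 b M³` then
`a x ≤ b x⁴ + M` for all nonnegative reals. -/
lemma amgm_aux (a b M x : ℝ) (ha : 0 ≤ a) (hb : 0 ≤ b) (hM : 0 ≤ M) (hx : 0 ≤ x)
    (h : 27 * a ^ 4 ≤ 256 * b * M ^ 3) : a * x ≤ b * x ^ 4 + M := by
  have hu : 0 ≤ b * x ^ 4 := by positivity
  have hfact : 0 ≤ (3 * (b * x ^ 4) - M) ^ 2 *
      (3 * (b * x ^ 4) ^ 2 + 14 * (b * x ^ 4) * M + 27 * M ^ 2) := by positivity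
  have key : (a * x) ^ 4 ≤ (b * x ^ 4 + M) ^ 4 := by
    have hax : 27 * (a * x) ^ 4 ≤ 256 * (b * x ^ 4) * M ^ 3 := by
      have hx4 : 0 ≤ x ^ 4 := by positivity
      nlinarith [mul_le_mul_of_nonneg_right h hx4]
    nlinarith [hfact]
  exact le_of_pow_le_pow_left₀ (by norm_num) (by positivity) key

set_option maxHeartbeats 2000000 in
/-- combined arithmetic chain of Lemma 4.5 and Theorem 5.3.
Let `C > 1`, `n ≥ 1`, `0 ≤ α ≤ γ ≤ 1` with `γ + α > 0`, and define
`η* = 16(γ+α)^4 / (27(1+C)^4 n^24)` and `p* = 32(γ+α)^3 / (27(1+C)^4 n^24)`.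
Suppose `δ₁ ∈ [0,1]`, `0 ≤ δ₂ ≤ C n^6 δ₁^{1/4}`, `t ∈ [−γ, γ]`, and `ε ≥ 0` satisfy
`(1−p*)(1−δ₁) + p*(δ₂ + 1 − (γ+t)/2) ≥ 1 − ε`.  Then
`t ≤ α + (27(1+C)^4/(16(γ+α)^3)) n^24 ε`. -/
theorem stmt_4 (C : ℝ) (hC : 1 < C) (n : ℕ) (hn : 1 ≤ n)
    (α γ : ℝ) (hα : 0 ≤ α) (hαγ : α ≤ γ) (hγ : γ ≤ 1) (hpos : 0 < γ + α) :
    let ps : ℝ := 32 * (γ + α) ^ 3 / (27 * (1 + C) ^ 4 * (n : ℝ) ^ 24)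
    ∀ δ₁ δ₂ t ε : ℝ, 0 ≤ δ₁ → δ₁ ≤ 1 → 0 ≤ δ₂ → δ₂ ≤ C * (n : ℝ) ^ 6 * δ₁ ^ ((1 : ℝ) / 4) →
      -γ ≤ t → t ≤ γ → 0 ≤ ε →
      (1 - ps) * (1 - δ₁) + ps * (δ₂ + 1 - (γ + t) / 2) ≥ 1 - ε →
      t ≤ α + 27 * (1 + C) ^ 4 / (16 * (γ + α) ^ 3) * (n : ℝ) ^ 24 * ε := by
  intro ps δ₁ δ₂ t ε hδ₁0 hδ₁1 hδ₂0 hδ₂ hγt htγ hε hwin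
  have hn1 : (1 : ℝ) ≤ (n : ℝ) := by exact_mod_cast hn
  have hN1 : (1 : ℝ) ≤ (n : ℝ) ^ 24 := one_le_pow₀ hn1
  have hC0 : (0 : ℝ) < 1 + C := by linarith
  have hD : (0 : ℝ) < 27 * (1 + C) ^ 4 * (n : ℝ) ^ 24 := by positivity
  have hps : 0 < ps := by
    show 0 < 32 * (γ + α) ^ 3 / (27 * (1 + C) ^ 4 * (n : ℝ) ^ 24)
    positivity
  have hps_eq : ps * (27 * (1 + C) ^ 4 * (n : ℝ) ^ 24) = 32 * (γ + α) ^ 3 := by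
    show 32 * (γ + α) ^ 3 / (27 * (1 + C) ^ 4 * (n : ℝ) ^ 24) *
      (27 * (1 + C) ^ 4 * (n : ℝ) ^ 24) = 32 * (γ + α) ^ 3
    field_simp
  clear_value ps
  have hs2 : γ + α ≤ 2 := by linarith
  have hs3 : (γ + α) ^ 3 ≤ 8 := by
    nlinarith [mul_nonneg (by linarith : (0:ℝ) ≤ 2 - (γ + α))
      (by nlinarith [sq_nonneg (γ + α)] : (0:ℝ) ≤ 4 + 2 * (γ + α) + (γ + α) ^ 2)]
  have hC4pos : (0 : ℝ) < (1 + C) ^ 4 := by positivity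
  -- ps (1+C)^4 ≤ 256/27
  have hps_small : ps * (1 + C) ^ 4 ≤ 256 / 27 := by
    have h1 : ps * (1 + C) ^ 4 * (27 * (n : ℝ) ^ 24) = 32 * (γ + α) ^ 3 := by
      linear_combination hps_eq
    nlinarith [mul_le_mul_of_nonneg_left hN1
      (le_of_lt (mul_pos hps hC4pos))]
  have h16 : (16 : ℝ) ≤ (1 + C) ^ 4 := by nlinarith [sq_nonneg (C - 1), sq_nonneg ((1+C)^2 - 4)]
  have hps_lt1 : ps < 1 := by nlinarith [hps_small, h16]
  -- the AM-GM hypothesis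
  have ha : 0 ≤ ps * (C * (n : ℝ) ^ 6) := mul_nonneg hps.le (by positivity)
  have hb : 0 ≤ 1 - ps := by linarith
  have hM : 0 ≤ ps * (γ + α) / 2 := div_nonneg (mul_nonneg hps.le hpos.le) (by norm_num)
  have hkey : 27 * (ps * (C * (n : ℝ) ^ 6)) ^ 4 ≤
      256 * (1 - ps) * (ps * (γ + α) / 2) ^ 3 := by
    have e1 : 27 * (ps * (C * (n : ℝ) ^ 6)) ^ 4
        = ps ^ 3 * (27 * ps * (n : ℝ) ^ 24 * C ^ 4) := by ring
    have e2 : 256 * (1 - ps) * (ps * (γ + α) / 2) ^ 3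
        = ps ^ 3 * (32 * (1 - ps) * (γ + α) ^ 3) := by ring
    rw [e1, e2]
    refine mul_le_mul_of_nonneg_left ?_ (pow_nonneg hps.le 3)
    have hC1 : (0:ℝ) ≤ C - 1 := by linarith
    have hC4 : 256 / 27 ≤ (1 + C) ^ 4 - C ^ 4 := by
      nlinarith [mul_nonneg (mul_nonneg hC1 hC1) hC1, mul_nonneg hC1 hC1]
    have hQ : C ^ 4 ≤ (1 - ps) * (1 + C) ^ 4 := by nlinarith [le_trans hps_small hC4]
    have h3 : 27 * ps * (n : ℝ) ^ 24 * (1 + C) ^ 4 = 32 * (γ + α) ^ 3 := by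
      linear_combination hps_eq
    have hpsN : (0:ℝ) ≤ 27 * ps * (n : ℝ) ^ 24 :=
      mul_nonneg (mul_nonneg (by norm_num) hps.le) (by positivity)
    calc 27 * ps * (n : ℝ) ^ 24 * C ^ 4
        ≤ 27 * ps * (n : ℝ) ^ 24 * ((1 - ps) * (1 + C) ^ 4) :=
          mul_le_mul_of_nonneg_left hQ hpsN
      _ = (1 - ps) * (27 * ps * (n : ℝ) ^ 24 * (1 + C) ^ 4) := by ring
      _ = (1 - ps) * (32 * (γ + α) ^ 3) := by rw [h3]
      _ = 32 * (1 - ps) * (γ + α) ^ 3 := by ring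
  have hx : 0 ≤ δ₁ ^ ((1 : ℝ) / 4) := Real.rpow_nonneg hδ₁0 _
  have hx4 : (δ₁ ^ ((1 : ℝ) / 4)) ^ 4 = δ₁ := by
    rw [← Real.rpow_natCast (δ₁ ^ ((1:ℝ)/4)) 4, ← Real.rpow_mul hδ₁0]
    norm_num
  have hmain := amgm_aux (ps * (C * (n : ℝ) ^ 6)) (1 - ps) (ps * (γ + α) / 2)
    (δ₁ ^ ((1 : ℝ) / 4)) ha hb hM hx hkey
  rw [hx4] at hmain
  -- combine with the winning probability hypothesis
  have hδ₂' : ps * δ₂ ≤ ps * (C * (n : ℝ) ^ 6) * δ₁ ^ ((1:ℝ)/4) := by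
    calc ps * δ₂ ≤ ps * (C * (n : ℝ) ^ 6 * δ₁ ^ ((1:ℝ)/4)) :=
          mul_le_mul_of_nonneg_left hδ₂ hps.le
      _ = ps * (C * (n : ℝ) ^ 6) * δ₁ ^ ((1:ℝ)/4) := by ring
  have hchain : ps * (t - α) ≤ 2 * ε := by nlinarith [hmain, hδ₂', hwin]
  have hrw : 27 * (1 + C) ^ 4 / (16 * (γ + α) ^ 3) * (n : ℝ) ^ 24 * ε * ps = 2 * ε := by
    have hsne : (16 * (γ + α) ^ 3) ≠ 0 := by positivity
    have e : 27 * (1 + C) ^ 4 / (16 * (γ + α) ^ 3) * (n : ℝ) ^ 24 * ε * ps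
        = ε * (ps * (27 * (1 + C) ^ 4 * (n : ℝ) ^ 24)) / (16 * (γ + α) ^ 3) := by
      ring
    rw [e, hps_eq]
    field_simp
    ring
  have hfin : (t - α) * ps ≤ (27 * (1 + C) ^ 4 / (16 * (γ + α) ^ 3) * (n : ℝ) ^ 24 * ε) * ps := by
    rw [hrw]; linarith [hchain]
  have := le_of_mul_le_mul_right hfin hps
  linarith
end

section
/- Let H_B be a finite-dimensional complex inner product space and let X₁,…,X_n and Z₁,…,Z_n be unitary operators on H_B. For bit strings a, b ∈ {0,1}^n write X^a = X₁^{a₁}X₂^{a₂}⋯X_n^{a_n} and Z^b = Z₁^{b₁}Z₂^{b₂}⋯Z_n^{b_n} (ordered products). Let U be the unitary on H_B ⊗ ℂ^{2^n} ⊗ ℂ^{2^n} given by the circuit U = CNOT_{E₂→E₁} ∘ CX_{E₁→B} ∘ (I ⊗ H^{⊗n} ⊗ I) ∘ CZ_{E₁→B} ∘ (I ⊗ H^{⊗n} ⊗ I), where CZ_{E₁→B} = ∑_{b∈{0,1}^n} Z^b ⊗ |b⟩⟨b| ⊗ I, CX_{E₁→B} = ∑_{c∈{0,1}^n} X^c ⊗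 |c⟩⟨c| ⊗ I, H^{⊗n} is the n-qubit Hadamard acting on the first extractor register E₁, and CNOT_{E₂→E₁} maps |u⟩_{E₁}|v⟩_{E₂} ↦ |u+v⟩_{E₁}|v⟩_{E₂} (bitwise XOR). Then for every ψ ∈ H_B, U(ψ ⊗ |Φ⁺_n⟩) = 2^{−3n/2} ∑_{a,b,c ∈ {0,1}^n} (−1)^{b·c} X^a Z^b ψ ⊗ |c⟩ ⊗ |a+c⟩, where |Φ⁺_n⟩ = 2^{−n/2} ∑_{a∈{0,1}^n} |a⟩ ⊗ |a⟩, b·c = ∑_i b_i c_i, and a+c is bitwise XOR. -/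
/-!
**Statement 5** (Section 5.1 of the paper, establishing equation (3)).

We model the `n`-qubit registers `E₁, E₂` by indexing amplitudes with bit
strings `Fin n → Bool`, so that a state of `H_B ⊗ ℂ^{2^n} ⊗ ℂ^{2^n}` is an
`H_B`-valued function of the two bit strings (its basis components).
-/

namespace Stmt5

/-- `b · c = ∑ i, b i * c i` for bit strings. -/
def bdot {n : ℕ} (b c : Fin n → Bool) : ℕ :=
  (Finset.univ.filter fun i => b i ∧ c i).card

/-- Bitwise XOR of bit strings. -/
def bxor {n : ℕ} (a c : Fin n → Bool) : Fin n → Bool := fun i => xor (a i) (c i)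

variable {HB : Type*} [NormedAddCommGroup HB] [InnerProductSpace ℂ HB]

/-- The ordered product `X₁^{a₁} X₂^{a₂} ⋯ X_n^{a_n}` applied to a vector. -/
def ordProdApply {n : ℕ} (X : Fin n → (HB →ₗ[ℂ] HB)) (a : Fin n → Bool) (v : HB) : HB :=
  (List.finRange n).foldr (fun i w => if a i then X i w else w) v

/-- States of `H_B ⊗ ℂ^{2^n} ⊗ ℂ^{2^n}` as `H_B`-valued basis components. -/
abbrev QState (HB : Type*) (n : ℕ) := (Fin n → Bool) → (Fin n → Bool) → HB

noncomputable def invSqrt2 : ℂ := (Real.sqrt 2 : ℂ)⁻¹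

/-- Hadamard `H^{⊗n}` on the first extractor register `E₁`. -/
noncomputable def hadE1 {n : ℕ} (f : QState HB n) : QState HB n := fun y z =>
  invSqrt2 ^ n • ∑ y' : Fin n → Bool, ((-1 : ℂ) ^ bdot y y') • f y' z

/-- `CZ_{E₁→B} = ∑_b Z^b ⊗ |b⟩⟨b| ⊗ I`. -/
def czE1B {n : ℕ} (Z : Fin n → (HB →ₗ[ℂ] HB)) (f : QState HB n) : QState HB n :=
  fun y z => ordProdApply Z y (f y z)

/-- `CX_{E₁→B} = ∑_c X^c ⊗ |c⟩⟨c| ⊗ I`. -/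
def cxE1B {n : ℕ} (X : Fin n → (HB →ₗ[ℂ] HB)) (f : QState HB n) : QState HB n :=
  fun y z => ordProdApply X y (f y z)

/-- `CNOT_{E₂→E₁} : |u⟩_{E₁}|v⟩_{E₂} ↦ |u+v⟩_{E₁}|v⟩_{E₂}`. -/
def cnotE2E1 {n : ℕ} (f : QState HB n) : QState HB n := fun y z => f (bxor y z) z

/-- The swap-gadget circuit
`U = CNOT_{E₂→E₁} ∘ CX_{E₁→B} ∘ (I ⊗ H^{⊗n} ⊗ I) ∘ CZ_{E₁→B} ∘ (I ⊗ H^{⊗n} ⊗ I)`. -/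
noncomputable def gadget {n : ℕ} (X Z : Fin n → (HB →ₗ[ℂ] HB)) (f : QState HB n) :
    QState HB n :=
  cnotE2E1 (cxE1B X (hadE1 (czE1B Z (hadE1 f))))

/-- The initial state `ψ ⊗ |Φ⁺_n⟩`. -/
noncomputable def initState {n : ℕ} (ψ : HB) : QState HB n := fun y z =>
  if y = z then invSqrt2 ^ n • ψ else 0

end Stmt5

namespace Stmt5

section Aux

variable {HB : Type*} [NormedAddCommGroup HB] [InnerProductSpace ℂ HB]

def opL {n : ℕ} (X : Fin n → (HB →ₗ[ℂ] HB)) (a : Fin n → Bool) : HB →ₗ[ℂ] HB :=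
  (List.finRange n).foldr (fun i L => (if a i then X i else LinearMap.id).comp L) LinearMap.id

lemma ordProdApply_eq {n : ℕ} (X : Fin n → (HB →ₗ[ℂ] HB)) (a : Fin n → Bool) (v : HB) :
    ordProdApply X a v = opL X a v := by
  unfold ordProdApply opL
  induction List.finRange n with
  | nil => rfl
  | cons i l ih =>
      simp only [List.foldr_cons, ih, LinearMap.comp_apply]
      split <;> rfl

lemma neg_one_bdot {n : ℕ} (u w : Fin n → Bool) :
    ((-1 : ℂ)) ^ bdot u w = ∏ i : Fin n, (if u i ∧ w i then (-1:ℂ) else 1) := by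
  rw [bdot, ← Finset.prod_const, Finset.prod_filter]

lemma sign_eq {n : ℕ} (c d b : Fin n → Bool) :
    ((-1:ℂ)) ^ bdot (bxor c d) b * (-1) ^ bdot b d = (-1) ^ bdot b c := by
  rw [neg_one_bdot, neg_one_bdot, neg_one_bdot, ← Finset.prod_mul_distrib]
  refine Finset.prod_congr rfl fun i _ => ?_
  cases hc : c i <;> cases hd : d i <;> cases hb : b i <;> simp [bxor, hc, hd, hb]

lemma bxor_eq_iff {n : ℕ} (a c d : Fin n → Bool) :
    d = bxor a c ↔ a = bxor c d := by
  constructor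
  · rintro rfl; funext i; simp only [bxor]; cases a i <;> cases c i <;> rfl
  · rintro rfl; funext i; simp only [bxor]; cases c i <;> cases d i <;> rfl

end Aux

end Stmt5


open Stmt5 in
/-- For unitaries `X₁,…,X_n, Z₁,…,Z_n` on a finite-dimensional complex inner
product space `H_B`, the circuit `U` of Figure 7 satisfies
`U(ψ ⊗ |Φ⁺_n⟩) = 2^{−3n/2} ∑_{a,b,c} (−1)^{b·c} X^a Z^b ψ ⊗ |c⟩ ⊗ |a+c⟩`. -/
theorem stmt_5 {HB : Type*} [NormedAddCommGroup HB] [InnerProductSpace ℂ HB]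
    [FiniteDimensional ℂ HB]
    (n : ℕ) (hn : 1 ≤ n) (X Z : Fin n → (HB →ₗ[ℂ] HB))
    (hX : ∀ i, ∀ v w : HB, (inner ℂ (X i v) (X i w) : ℂ) = inner ℂ v w)
    (hXsurj : ∀ i, Function.Surjective (X i))
    (hZ : ∀ i, ∀ v w : HB, (inner ℂ (Z i v) (Z i w) : ℂ) = inner ℂ v w)
    (hZsurj : ∀ i, Function.Surjective (Z i))
    (ψ : HB) :
    gadget X Z (initState ψ) = fun c' d' =>
      invSqrt2 ^ (3 * n) •
        ∑ a : Fin n → Bool, ∑ b : Fin n → Bool, ∑ c : Fin n → Bool,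
          if c' = c ∧ d' = bxor a c then
            ((-1 : ℂ) ^ bdot b c) • ordProdApply X a (ordProdApply Z b ψ)
          else 0 := by
  funext c' d'
  simp only [gadget, cnotE2E1, cxE1B, hadE1, czE1B, initState, ordProdApply_eq,
    smul_ite, smul_zero, Finset.sum_ite_eq', Finset.mem_univ, if_true,
    map_smul, map_sum, Finset.smul_sum, smul_smul]
  simp only [ite_and, Finset.sum_ite_eq, Finset.mem_univ, if_true]
  simp only [show ∀ x : Fin n → Bool, (d' = bxor x c') ↔ (x = bxor c' d') from
    fun x => bxor_eq_iff x c' d']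
  rw [Finset.sum_comm]
  simp only [Finset.sum_ite_eq', Finset.mem_univ, if_true]
  refine Finset.sum_congr rfl fun b _ => ?_
  congr 1
  rw [show 3 * n = n + n + n by ring, pow_add, pow_add, ← sign_eq c' d' b]
  ring
end
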